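/- If a vector v satisfies ⟨v, w⟩ ≤ 0 for all w in the tangent cone T_C(x̄), then v ∈ N̂_C(x̄); i.e., T_C(x̄)° ⊆ N̂_C(x̄). -/

import Mathlib

/-- The regular (Fréchet) normal cone of `C` at `x₀`, via the ε–δ definition. -/
def regNormalCone {E : Type*} [NormedAddCommGroup E] [InnerProductSpace ℝ E]
    (C : Set E) (x₀ : E) : Set E :=
  {v | ∀ ε > (0 : ℝ), ∃ δ > (0 : ℝ), ∀ x ∈ C, 0 < ‖x - x₀‖ → ‖x - x₀‖ ≤ δ →
    (inner ℝ v (x - x₀) : ℝ) ≤ ε * ‖x - x₀‖}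

/-- The tangent (contingent) cone of `C` at `x₀`: limits of `(xₖ - x₀)/αₖ` with
`xₖ ∈ C`, `xₖ → x₀`, `αₖ ↓ 0`. -/
def tangentConeAt' {E : Type*} [NormedAddCommGroup E] [InnerProductSpace ℝ E]
    (C : Set E) (x₀ : E) : Set E :=
  {w | ∃ (xs : ℕ → E) (a : ℕ → ℝ), (∀ k, xs k ∈ C) ∧
    Filter.Tendsto xs Filter.atTop (nhds x₀) ∧
    (∀ k, 0 < a k) ∧ Filter.Tendsto a Filter.atTop (nhds 0) ∧
    Filter.Tendsto (fun k => (a k)⁻¹ • (xs k - x₀)) Filter.atTop (nhds w)}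

/-- The polar of a set. -/
def polarSet {E : Type*} [NormedAddCommGroup E] [InnerProductSpace ℝ E]
    (A : Set E) : Set E :=
  {v | ∀ x ∈ A, (inner ℝ v x : ℝ) ≤ 0}

open Filter Topology

section RegularNormal

variable {E : Type*} [NormedAddCommGroup E] [InnerProductSpace ℝ E] {C : Set E} {x₀ v : E}

theorem exists_seq_of_notMem_regNormalCone (hv : v ∉ regNormalCone C x₀) :
    ∃ ε > (0 : ℝ), ∃ xs : ℕ → E, (∀ k, xs k ∈ C) ∧ (∀ k, xs k ≠ x₀) ∧
      Tendsto xs atTop (𝓝 x₀) ∧ ∀ k, ε * ‖xs k - x₀‖ < inner ℝ v (xs k - x₀) := by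
  obtain ⟨ε, hε, hbad⟩ : ∃ ε > (0 : ℝ), ∀ δ > (0 : ℝ), ∃ x ∈ C, 0 < ‖x - x₀‖ ∧ ‖x - x₀‖ ≤ δ ∧
      ε * ‖x - x₀‖ < inner ℝ v (x - x₀) := by
    simpa [regNormalCone] using hv
  choose xs hxsC hpos hle hineq using fun k : ℕ => hbad (1 / (k + 1)) (by positivity)
  refine ⟨ε, hε, xs, hxsC, fun k => sub_ne_zero.1 (norm_pos_iff.1 (hpos k)), ?_, hineq⟩
  exact tendsto_iff_norm_sub_tendsto_zero.2 <|
    squeeze_zero (fun _ => norm_nonneg _) hle tendsto_one_div_add_atTop_nhds_zero_nat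

theorem mem_tangentConeAt'_of_tendsto_normalize {xs : ℕ → E} {w : E} (hC : ∀ k, xs k ∈ C)
    (hne : ∀ k, xs k ≠ x₀) (hlim : Tendsto xs atTop (𝓝 x₀))
    (hdir : Tendsto (fun k => ‖xs k - x₀‖⁻¹ • (xs k - x₀)) atTop (𝓝 w)) :
    w ∈ tangentConeAt' C x₀ :=
  ⟨xs, fun k => ‖xs k - x₀‖, hC, hlim, fun k => norm_pos_iff.2 (sub_ne_zero.2 (hne k)),
    tendsto_iff_norm_sub_tendsto_zero.1 hlim, hdir⟩

/-- Unit directions towards points of `C` have a limit point by compactness of the unit sphere;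
that limit lies in the tangent cone, and the strict inequalities pass to it with margin `ε`. -/
theorem polarSet_tangentConeAt'_subset_regNormalCone [ProperSpace E] :
    polarSet (tangentConeAt' C x₀) ⊆ regNormalCone C x₀ := by
  intro v hv
  by_contra hvN
  obtain ⟨ε, hε, xs, hC, hne, hlim, hineq⟩ := exists_seq_of_notMem_regNormalCone hvN
  set u : ℕ → E := fun k => ‖xs k - x₀‖⁻¹ • (xs k - x₀)
  have hu : ∀ k, u k ∈ Metric.sphere (0 : E) 1 := fun k => by
    simpa [u] using norm_smul_inv_norm (𝕜 := ℝ) (sub_ne_zero.2 (hne k))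
  obtain ⟨w, -, φ, hφ, huw⟩ := (isCompact_sphere (0 : E) 1).tendsto_subseq hu
  have hw : w ∈ tangentConeAt' C x₀ :=
    mem_tangentConeAt'_of_tendsto_normalize (fun k => hC (φ k)) (fun k => hne (φ k))
      (hlim.comp hφ.tendsto_atTop) huw
  have hεu : ∀ k, ε ≤ inner ℝ v (u (φ k)) := fun k => by
    have hpos : 0 < ‖xs (φ k) - x₀‖ := norm_pos_iff.2 (sub_ne_zero.2 (hne (φ k)))
    rw [real_inner_smul_right, le_inv_mul_iff₀ hpos, mul_comm]
    exact (hineq (φ k)).le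
  have hεw : ε ≤ inner ℝ v w := ge_of_tendsto' (tendsto_const_nhds.inner huw) hεu
  linarith [hv w hw]

end RegularNormal

theorem polar_tangentCone_subset_regNormalCone_general {n : ℕ}
    (C : Set (EuclideanSpace ℝ (Fin n))) (x₀ : EuclideanSpace ℝ (Fin n))
    (v : EuclideanSpace ℝ (Fin n))
    (hv : ∀ w ∈ tangentConeAt' C x₀, (inner ℝ v w : ℝ) ≤ 0) :
    v ∈ regNormalCone C x₀ :=
  polarSet_tangentConeAt'_subset_regNormalCone hv

theorem polar_tangentCone_subset_regNormalCone {n : ℕ}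
    (C : Set (EuclideanSpace ℝ (Fin n))) (x₀ : EuclideanSpace ℝ (Fin n)) (hx : x₀ ∈ C)
    (v : EuclideanSpace ℝ (Fin n))
    (hv : ∀ w ∈ tangentConeAt' C x₀, (inner ℝ v w : ℝ) ≤ 0) :
    v ∈ regNormalCone C x₀ :=
  polar_tangentCone_subset_regNormalCone_general C x₀ v hv
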